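/- arXiv:1911.01391 — 8 statements merged into one kernel-verified Lean document; each statement's English description precedes it below -/
import Mathlib

section
/- Let 𝒴 be a finite nonempty set, and for each y ∈ 𝒴 let λ_y > 0 with Σ_{y∈𝒴} λ_y = 1, and let μ_y > 0, σ_y > 0, π_y > 0. Define μ^π := Σ_y λ_y μ_y π_y, (σ^π)² := Σ_y λ_y (σ_y² π_y² + (μ_y π_y − μ^π)²), and the portfolio Sharpe ratio s^π := μ^π / σ^π. Then s^π ≤ max_{y∈𝒴} (μ_y/σ_y). Moreover, if the map y ↦ μ_y π_y is not constant on 𝒴, the inequality is strict; in particular the bound is attained when |𝒴| = 1. -/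
/-- The long-run Sharpe ratio of a state-dependent constant-proportion strategy
is bounded by the largest per-state market Sharpe ratio; the bound is strict when the
per-state mean portfolio excess returns are not constant, and attained when there is a
single state. -/
theorem sharpe_ratio_le_max_state_sharpe
    {Y : Type*} [Fintype Y] [Nonempty Y]
    (lam mu sig piv : Y → ℝ)
    (hlam : ∀ y, 0 < lam y) (hsum : ∑ y, lam y = 1)
    (hmu : ∀ y, 0 < mu y) (hsig : ∀ y, 0 < sig y) (hpi : ∀ y, 0 < piv y)
    (mupi sigpi s : ℝ)
    (hmupi : mupi = ∑ y, lam y * (mu y * piv y))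
    (hsigpi : sigpi = Real.sqrt
      (∑ y, lam y * ((sig y)^2 * (piv y)^2 + (mu y * piv y - mupi)^2)))
    (hs : s = mupi / sigpi) :
    s ≤ Finset.univ.sup' Finset.univ_nonempty (fun y => mu y / sig y) ∧
    ((¬ ∀ y y' : Y, mu y * piv y = mu y' * piv y') →
      s < Finset.univ.sup' Finset.univ_nonempty (fun y => mu y / sig y)) ∧
    (Fintype.card Y = 1 →
      s = Finset.univ.sup' Finset.univ_nonempty (fun y => mu y / sig y)) := by
  set M := Finset.univ.sup' Finset.univ_nonempty (fun y => mu y / sig y) with hMdef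
  have hM : ∀ y : Y, mu y / sig y ≤ M := fun y => by
    rw [hMdef]; exact Finset.le_sup' (fun y => mu y / sig y) (Finset.mem_univ y)
  obtain ⟨y₀⟩ := ‹Nonempty Y›
  have hMpos : 0 < M := lt_of_lt_of_le (div_pos (hmu y₀) (hsig y₀)) (hM y₀)
  set A := ∑ y, lam y * ((sig y)^2 * (piv y)^2) with hA
  set B := ∑ y, lam y * (mu y * piv y - mupi)^2 with hB
  have hsplit : (∑ y, lam y * ((sig y)^2 * (piv y)^2 + (mu y * piv y - mupi)^2)) = A + B := by
    rw [hA, hB, ← Finset.sum_add_distrib]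
    congr 1; ext y; ring
  have hApos : 0 < A := by
    refine Finset.sum_pos (fun y _ => ?_) ⟨y₀, Finset.mem_univ y₀⟩
    exact mul_pos (hlam y) (mul_pos (pow_pos (hsig y) 2) (pow_pos (hpi y) 2))
  have hBnonneg : 0 ≤ B :=
    Finset.sum_nonneg fun y _ => mul_nonneg (hlam y).le (sq_nonneg _)
  have hsigpiA : sigpi = Real.sqrt (A + B) := by rw [hsigpi, hsplit]
  have hsigpipos : 0 < sigpi := by
    rw [hsigpiA]; exact Real.sqrt_pos.mpr (by linarith)
  -- Cauchy–Schwarz: (∑ λ σ π)² ≤ A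
  have hCS : (∑ y, lam y * (sig y * piv y)) ^ 2 ≤ A := by
    have := Finset.sum_mul_sq_le_sq_mul_sq Finset.univ
      (fun y => Real.sqrt (lam y)) (fun y => Real.sqrt (lam y) * (sig y * piv y))
    calc (∑ y, lam y * (sig y * piv y)) ^ 2
        = (∑ y, Real.sqrt (lam y) * (Real.sqrt (lam y) * (sig y * piv y))) ^ 2 := by
          congr 1; refine Finset.sum_congr rfl fun y _ => ?_
          have h := Real.sq_sqrt (hlam y).le
          linear_combination (-(sig y * piv y)) * h
      _ ≤ (∑ y, Real.sqrt (lam y) ^ 2) * ∑ y, (Real.sqrt (lam y) * (sig y * piv y)) ^ 2 :=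
          this
      _ = A := by
          have h1 : (∑ y, Real.sqrt (lam y) ^ 2) = 1 := by
            rw [← hsum]; exact Finset.sum_congr rfl fun y _ => Real.sq_sqrt (hlam y).le
          rw [h1, one_mul, hA]
          refine Finset.sum_congr rfl fun y _ => ?_
          rw [mul_pow, Real.sq_sqrt (hlam y).le]; ring
  have hsumnn : 0 ≤ ∑ y, lam y * (sig y * piv y) :=
    Finset.sum_nonneg fun y _ =>
      mul_nonneg (hlam y).le (mul_pos (hsig y) (hpi y)).le
  have hCS' : (∑ y, lam y * (sig y * piv y)) ≤ Real.sqrt A :=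
    (Real.le_sqrt hsumnn hApos.le).mpr hCS
  -- mupi ≤ M * ∑ λ σ π
  have hmupile : mupi ≤ M * Real.sqrt A := by
    calc mupi = ∑ y, lam y * (mu y * piv y) := hmupi
      _ ≤ ∑ y, lam y * (M * (sig y * piv y)) := by
          refine Finset.sum_le_sum fun y _ => ?_
          refine mul_le_mul_of_nonneg_left ?_ (hlam y).le
          have : mu y ≤ M * sig y := (div_le_iff₀ (hsig y)).mp (hM y)
          calc mu y * piv y ≤ M * sig y * piv y :=
                mul_le_mul_of_nonneg_right this (hpi y).le
            _ = M * (sig y * piv y) := by ring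
      _ = M * ∑ y, lam y * (sig y * piv y) := by
          rw [Finset.mul_sum]; exact Finset.sum_congr rfl fun y _ => by ring
      _ ≤ M * Real.sqrt A := mul_le_mul_of_nonneg_left hCS' hMpos.le
  have hsqrtle : Real.sqrt A ≤ sigpi := by
    rw [hsigpiA]; exact Real.sqrt_le_sqrt (by linarith)
  constructor
  · rw [hs, div_le_iff₀ hsigpipos]
    calc mupi ≤ M * Real.sqrt A := hmupile
      _ ≤ M * sigpi := mul_le_mul_of_nonneg_left hsqrtle hMpos.le
  constructor
  · intro hnc
    have hBpos : 0 < B := by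
      rcases hBnonneg.lt_or_eq with h | h
      · exact h
      · exfalso
        apply hnc
        have hzero : ∀ y : Y, lam y * (mu y * piv y - mupi)^2 = 0 := by
          intro y
          have := (Finset.sum_eq_zero_iff_of_nonneg
            (fun y _ => mul_nonneg (hlam y).le (sq_nonneg _))).mp h.symm
          exact this y (Finset.mem_univ y)
        intro y y'
        have hy : mu y * piv y = mupi := by
          have := hzero y
          have h2 : (mu y * piv y - mupi)^2 = 0 := by
            rcases mul_eq_zero.mp this with h | h
            · exact absurd h (hlam y).ne'
            · exact h
          have := pow_eq_zero_iff (n := 2) (by norm_num) |>.mp h2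
          linarith
        have hy' : mu y' * piv y' = mupi := by
          have := hzero y'
          have h2 : (mu y' * piv y' - mupi)^2 = 0 := by
            rcases mul_eq_zero.mp this with h | h
            · exact absurd h (hlam y').ne'
            · exact h
          have := pow_eq_zero_iff (n := 2) (by norm_num) |>.mp h2
          linarith
        rw [hy, hy']
    have hstrict : Real.sqrt A < sigpi := by
      rw [hsigpiA]
      exact Real.sqrt_lt_sqrt hApos.le (by linarith)
    rw [hs, div_lt_iff₀ hsigpipos]
    calc mupi ≤ M * Real.sqrt A := hmupile
      _ < M * sigpi := by exact mul_lt_mul_of_pos_left hstrict hMpos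
  · intro hcard
    obtain ⟨x, hx⟩ := Fintype.card_eq_one_iff.mp hcard
    have huniv : (Finset.univ : Finset Y) = {x} := by
      ext y; simp [hx y]
    have hlam1 : lam x = 1 := by
      rw [← hsum, huniv, Finset.sum_singleton]
    have hmupix : mupi = mu x * piv x := by
      rw [hmupi, huniv, Finset.sum_singleton, hlam1, one_mul]
    have hsigpix : sigpi = sig x * piv x := by
      rw [hsigpi, huniv, Finset.sum_singleton, hlam1, one_mul, hmupix,
        sub_self, ← mul_pow]
      norm_num
      exact Real.sqrt_sq (mul_pos (hsig x) (hpi x)).le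
    have hMx : M = mu x / sig x := by
      rw [hMdef]
      have : (Finset.univ : Finset Y).sup' Finset.univ_nonempty (fun y => mu y / sig y)
          = ({x} : Finset Y).sup' (by simp) (fun y => mu y / sig y) := by
        congr 1 <;> simp [huniv]
      rw [this, Finset.sup'_singleton]
    rw [hs, hmupix, hsigpix, hMx, mul_div_mul_right _ _ (hpi x).ne']
end

section
/- Let 𝒴 be a finite set with |𝒴| ≥ 2, and for each y ∈ 𝒴 let λ_y > 0 with Σ_{y∈𝒴} λ_y = 1, σ_y > 0, π_y > 0, and μ_y > 0. Fix y' ∈ 𝒴 and keep all parameters fixed except μ_{y'}. Then, with μ^π := Σ_y λ_y μ_y π_y, (σ^π)² := Σ_y λ_y (σ_y² π_y² + (μ_y π_y − μ^π)²) and s^π := μ^π/σ^π, one has s^π → λ_{y'} / √( λ_{y'}(1−λ_{y'})² + λ_{y'}² Σ_{y≠y'} λ_y ) = √( λ_{y'}/(1−λ_{y'}) ) as μ_{y'} → ∞. -/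
private lemma aux_tendsto (g f : ℝ → ℝ) (c : ℝ) (hg : ContinuousAt g 0) (hg0 : g 0 = c)
    (hfg : ∀ t : ℝ, 0 < t → f t = g (1/t)) :
    Filter.Tendsto f Filter.atTop (nhds c) := by
  have h1 : Filter.Tendsto (fun t : ℝ => 1/t) Filter.atTop (nhds 0) := by
    simpa [one_div] using tendsto_inv_atTop_zero
  have h2 : Filter.Tendsto (fun t => g (1/t)) Filter.atTop (nhds c) := by
    rw [← hg0]; exact hg.tendsto.comp h1
  exact h2.congr' ((Filter.eventually_gt_atTop 0).mono fun t ht => (hfg t ht).symm)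

/-- As the mean excess return in state y' tends to infinity (all other
parameters fixed), the long-run Sharpe ratio of the state-dependent constant-proportion
strategy tends to λ_{y'} / √(λ_{y'}(1−λ_{y'})² + λ_{y'}² Σ_{y≠y'} λ_y) = √(λ_{y'}/(1−λ_{y'})). -/
theorem sharpe_ratio_limit_large_state_mean
    {Y : Type*} [Fintype Y] [DecidableEq Y]
    (hcard : 2 ≤ Fintype.card Y)
    (lam sig piv mu0 : Y → ℝ) (y' : Y)
    (hlam : ∀ y, 0 < lam y) (hsum : ∑ y, lam y = 1)
    (hsig : ∀ y, 0 < sig y) (hpi : ∀ y, 0 < piv y) (hmu0 : ∀ y, 0 < mu0 y) :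
    lam y' / Real.sqrt (lam y' * (1 - lam y')^2
        + (lam y')^2 * ∑ y ∈ Finset.univ.erase y', lam y)
      = Real.sqrt (lam y' / (1 - lam y')) ∧
    Filter.Tendsto
      (fun t : ℝ =>
        (∑ y, lam y * (Function.update mu0 y' t y * piv y)) /
          Real.sqrt (∑ y, lam y * ((sig y)^2 * (piv y)^2 +
            (Function.update mu0 y' t y * piv y
              - ∑ z, lam z * (Function.update mu0 y' t z * piv z))^2)))
      Filter.atTop
      (nhds (lam y' / Real.sqrt (lam y' * (1 - lam y')^2
        + (lam y')^2 * ∑ y ∈ Finset.univ.erase y', lam y))) := by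
  have hL : 0 < lam y' := hlam y'
  have hErase : ∑ y ∈ Finset.univ.erase y', lam y = 1 - lam y' := by
    have h := Finset.add_sum_erase Finset.univ lam (Finset.mem_univ y')
    rw [hsum] at h; linarith
  have hL1 : lam y' < 1 := by
    obtain ⟨y0, hy0⟩ := Fintype.exists_ne_of_one_lt_card (by omega) y'
    have hpos : 0 < ∑ y ∈ Finset.univ.erase y', lam y :=
      Finset.sum_pos (fun y _ => hlam y)
        ⟨y0, Finset.mem_erase.mpr ⟨hy0, Finset.mem_univ y0⟩⟩
    rw [hErase] at hpos; linarith
  have h1L : 0 < 1 - lam y' := by linarith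
  have hden : lam y' * (1 - lam y')^2
      + (lam y')^2 * ∑ y ∈ Finset.univ.erase y', lam y = lam y' * (1 - lam y') := by
    rw [hErase]; ring
  have hsqrtpos : 0 < Real.sqrt (lam y' * (1 - lam y')) :=
    Real.sqrt_pos.mpr (mul_pos hL h1L)
  have hpart1 : lam y' / Real.sqrt (lam y' * (1 - lam y')^2
      + (lam y')^2 * ∑ y ∈ Finset.univ.erase y', lam y)
      = Real.sqrt (lam y' / (1 - lam y')) := by
    rw [hden]
    have hsL : Real.sqrt (lam y') ≠ 0 := by
      simp [Real.sqrt_eq_zero', not_le, hL]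
    calc lam y' / Real.sqrt (lam y' * (1 - lam y'))
        = (Real.sqrt (lam y') * Real.sqrt (lam y'))
            / (Real.sqrt (lam y') * Real.sqrt (1 - lam y')) := by
          rw [Real.mul_self_sqrt hL.le, ← Real.sqrt_mul hL.le]
      _ = Real.sqrt (lam y') / Real.sqrt (1 - lam y') := mul_div_mul_left _ _ hsL
      _ = Real.sqrt (lam y' / (1 - lam y')) := (Real.sqrt_div hL.le _).symm
  refine ⟨hpart1, ?_⟩
  -- abbreviations
  obtain ⟨C, hC⟩ : ∃ C : ℝ, C = ∑ y ∈ Finset.univ.erase y', lam y * (mu0 y * piv y) :=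
    ⟨_, rfl⟩
  -- the mean as affine function of t
  have hN : ∀ t : ℝ, (∑ y, lam y * (Function.update mu0 y' t y * piv y))
      = lam y' * piv y' * t + C := by
    intro t
    rw [hC, ← Finset.add_sum_erase Finset.univ
        (fun y => lam y * (Function.update mu0 y' t y * piv y)) (Finset.mem_univ y')]
    have hcongr : ∀ z ∈ Finset.univ.erase y',
        lam z * (Function.update mu0 y' t z * piv z) = lam z * (mu0 z * piv z) := by
      intro z hz
      rw [Function.update_of_ne (Finset.ne_of_mem_erase hz)]
    rw [Finset.sum_congr rfl hcongr, Function.update_self]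
    ring
  -- the reparametrized function g (s = 1/t)
  obtain ⟨g, hgdef⟩ : ∃ g : ℝ → ℝ, g = fun s : ℝ =>
      (lam y' * piv y' + C * s) /
        Real.sqrt (∑ y, lam y * ((sig y)^2 * (piv y)^2 * s^2 +
          (if y = y' then (1 - lam y') * piv y' - C * s
            else (mu0 y * piv y - C) * s - lam y' * piv y')^2)) := ⟨_, rfl⟩
  -- value of the inner sum at s = 0
  have hS0 : (∑ y, lam y * ((sig y)^2 * (piv y)^2 * (0:ℝ)^2 +
      (if y = y' then (1 - lam y') * piv y' - C * 0
        else (mu0 y * piv y - C) * 0 - lam y' * piv y')^2))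
      = lam y' * (1 - lam y') * (piv y')^2 := by
    rw [← Finset.add_sum_erase Finset.univ _ (Finset.mem_univ y')]
    have hcongr : ∀ z ∈ Finset.univ.erase y',
        lam z * ((sig z)^2 * (piv z)^2 * (0:ℝ)^2 +
          (if z = y' then (1 - lam y') * piv y' - C * 0
            else (mu0 z * piv z - C) * 0 - lam y' * piv y')^2)
        = lam z * ((lam y' * piv y')^2) := by
      intro z hz
      rw [if_neg (Finset.ne_of_mem_erase hz)]; ring
    rw [Finset.sum_congr rfl hcongr, ← Finset.sum_mul, hErase, if_pos rfl]
    ring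
  have hSpos : 0 < lam y' * (1 - lam y') * (piv y')^2 :=
    mul_pos (mul_pos hL h1L) (pow_pos (hpi y') 2)
  -- continuity of g at 0
  have hgc : ContinuousAt g 0 := by
    rw [hgdef]
    apply ContinuousAt.div
    · fun_prop
    · apply Continuous.continuousAt
      apply Real.continuous_sqrt.comp
      apply continuous_finset_sum
      intro y _
      have hif : Continuous fun s : ℝ => (if y = y' then (1 - lam y') * piv y' - C * s
          else (mu0 y * piv y - C) * s - lam y' * piv y') :=
        Continuous.if_const _ (by fun_prop) (by fun_prop)
      exact continuous_const.mul
        (((by fun_prop : Continuous fun s : ℝ => (sig y)^2 * (piv y)^2 * s^2)).add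
          (hif.pow 2))
    · show Real.sqrt (∑ y, lam y * ((sig y)^2 * (piv y)^2 * (0:ℝ)^2 +
        (if y = y' then (1 - lam y') * piv y' - C * 0
          else (mu0 y * piv y - C) * 0 - lam y' * piv y')^2)) ≠ 0
      rw [hS0]
      exact (Real.sqrt_pos.mpr hSpos).ne'
  -- value of g at 0
  have hg0 : g 0 = lam y' / Real.sqrt (lam y' * (1 - lam y')^2
      + (lam y')^2 * ∑ y ∈ Finset.univ.erase y', lam y) := by
    rw [hgdef]
    show (lam y' * piv y' + C * 0) / Real.sqrt (∑ y, lam y * ((sig y)^2 * (piv y)^2 * (0:ℝ)^2 +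
        (if y = y' then (1 - lam y') * piv y' - C * 0
          else (mu0 y * piv y - C) * 0 - lam y' * piv y')^2)) = _
    rw [hS0, hden, Real.sqrt_mul (mul_pos hL h1L).le ((piv y')^2),
      Real.sqrt_sq (hpi y').le, mul_zero, add_zero]
    rw [div_eq_div_iff (mul_pos hsqrtpos (hpi y')).ne' hsqrtpos.ne']
    ring
  -- pointwise identification for t > 0
  have hfg : ∀ t : ℝ, 0 < t →
      (∑ y, lam y * (Function.update mu0 y' t y * piv y)) /
        Real.sqrt (∑ y, lam y * ((sig y)^2 * (piv y)^2 +
          (Function.update mu0 y' t y * piv y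
            - ∑ z, lam z * (Function.update mu0 y' t z * piv z))^2)) = g (1/t) := by
    intro t ht
    have ht0 : t ≠ 0 := ht.ne'
    rw [hgdef]
    show _ = (lam y' * piv y' + C * (1/t)) /
        Real.sqrt (∑ y, lam y * ((sig y)^2 * (piv y)^2 * (1/t)^2 +
          (if y = y' then (1 - lam y') * piv y' - C * (1/t)
            else (mu0 y * piv y - C) * (1/t) - lam y' * piv y')^2))
    rw [hN t]
    have hDt : (∑ y, lam y * ((sig y)^2 * (piv y)^2 +
        (Function.update mu0 y' t y * piv y - (lam y' * piv y' * t + C))^2))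
        = t^2 * ∑ y, lam y * ((sig y)^2 * (piv y)^2 * (1/t)^2 +
          (if y = y' then (1 - lam y') * piv y' - C * (1/t)
            else (mu0 y * piv y - C) * (1/t) - lam y' * piv y')^2) := by
      rw [Finset.mul_sum]
      apply Finset.sum_congr rfl
      intro y _
      by_cases h : y = y'
      · subst h
        rw [Function.update_self, if_pos rfl]
        field_simp
        all_goals first | ring1 | exact Or.inl (by ring1)
      · rw [Function.update_of_ne h, if_neg h]
        field_simp
        all_goals first | ring1 | exact Or.inl (by ring1)
    have hNt : lam y' * piv y' * t + C = t * (lam y' * piv y' + C * (1/t)) := by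
      field_simp
    rw [hDt, hNt, Real.sqrt_mul (sq_nonneg t), Real.sqrt_sq ht.le]
    exact mul_div_mul_left _ _ ht0
  exact aux_tendsto g _ _ hgc hg0 hfg
end

section
/- Fix u > 0, b > 0, λ ∈ (0,1) and δ > −1, and for a > 0 set s(a) := D(a)/√K(a), where D(a) := 1 − λ + λ a (1+δ) and K(a) := u(1 − λ + λ b²(1+δ)²) + (1 − λ + λ a²(1+δ)²) − D(a)² (one has K(a) > 0). Then s is differentiable in a and ∂s/∂a > 0 if and only if a < (1+u)/(1+δ) + (λ/(1−λ)) · u b² (1+δ). -/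
/-!
Writing `c = 1 + δ`, the portfolio variance is `K(a) = M + λ(1-λ)(ac-1)²` with
`M = u(1-λ+λb²c²) > 0`, so `K > 0` and `s = D/√K` is smooth. The quotient rule gives
`s' = (D'K - DK'/2)/K^{3/2}`, and the numerator collapses to `λc(M - (1-λ)(ac-1))`, i.e. to
`λ(1-λ)c²` times the distance from `a` to the threshold.
-/

open Real

theorem HasDerivAt.div_sqrt {f g : ℝ → ℝ} {f' g' x : ℝ} (hf : HasDerivAt f f' x)
    (hg : HasDerivAt g g' x) (hx : 0 < g x) :
    HasDerivAt (fun y => f y / √(g y)) ((f' * g x - f x * g' / 2) / (g x * √(g x))) x := by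
  have hsqrt : 0 < √(g x) := sqrt_pos.mpr hx
  refine (hf.div (hg.sqrt hx.ne') hsqrt.ne').congr_deriv ?_
  field_simp
  rw [sq_sqrt hx.le]
  ring

section Portfolio

variable (u b lam δ : ℝ)

def portfolioMean (a : ℝ) : ℝ := 1 - lam + lam * a * (1 + δ)

def portfolioVariance (a : ℝ) : ℝ :=
  u * (1 - lam + lam * b ^ 2 * (1 + δ) ^ 2) + (1 - lam + lam * a ^ 2 * (1 + δ) ^ 2)
    - portfolioMean lam δ a ^ 2

theorem portfolioVariance_eq (a : ℝ) :
    portfolioVariance u b lam δ a =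
      u * (1 - lam + lam * b ^ 2 * (1 + δ) ^ 2) + lam * (1 - lam) * (a * (1 + δ) - 1) ^ 2 := by
  unfold portfolioVariance portfolioMean
  ring

variable {u b lam δ}

theorem portfolioVariance_pos (hu : 0 < u) (hlam : lam ∈ Set.Ioo (0 : ℝ) 1) (a : ℝ) :
    0 < portfolioVariance u b lam δ a := by
  obtain ⟨hlam₀, hlam₁⟩ := hlam
  have h1lam : 0 < 1 - lam := sub_pos.mpr hlam₁
  rw [portfolioVariance_eq]
  positivity

theorem hasDerivAt_portfolioMean (a : ℝ) :
    HasDerivAt (portfolioMean lam δ) (lam * (1 + δ)) a := by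
  have := ((hasDerivAt_id a).const_mul (lam * (1 + δ))).const_add (1 - lam)
  rw [mul_one] at this
  refine this.congr_of_eventuallyEq (Filter.Eventually.of_forall fun x => ?_)
  simp only [portfolioMean, id]
  ring

theorem hasDerivAt_portfolioVariance (a : ℝ) :
    HasDerivAt (portfolioVariance u b lam δ)
      (2 * lam * (1 - lam) * (1 + δ) * (a * (1 + δ) - 1)) a := by
  have hlin : HasDerivAt (fun x => x * (1 + δ) - 1) (1 + δ) a := by
    simpa using ((hasDerivAt_id a).mul_const (1 + δ)).sub_const 1
  have := ((hlin.pow 2).const_mul (lam * (1 - lam))).const_add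
    (u * (1 - lam + lam * b ^ 2 * (1 + δ) ^ 2))
  refine (this.congr_of_eventuallyEq (Filter.Eventually.of_forall
    (portfolioVariance_eq u b lam δ))).congr_deriv ?_
  norm_num
  ring

theorem sharpe_derivative_numerator_eq (hlam : lam ≠ 1) (hδ : δ ≠ -1) (a : ℝ) :
    lam * (1 + δ) * portfolioVariance u b lam δ a - portfolioMean lam δ a
        * (2 * lam * (1 - lam) * (1 + δ) * (a * (1 + δ) - 1)) / 2
      = lam * (1 - lam) * (1 + δ) ^ 2
        * ((1 + u) / (1 + δ) + lam / (1 - lam) * (u * b ^ 2 * (1 + δ)) - a) := by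
  have hc : 1 + δ ≠ 0 := fun h => hδ (by linarith)
  have h1lam : 1 - lam ≠ 0 := sub_ne_zero.mpr (Ne.symm hlam)
  rw [portfolioVariance_eq]
  unfold portfolioMean
  field_simp
  ring

end Portfolio

theorem sharpe_monotone_in_a_general
    (u b lam δ : ℝ) (hu : 0 < u)
    (hlam : lam ∈ Set.Ioo (0:ℝ) 1) (hδ : -1 < δ)
    (D K s : ℝ → ℝ)
    (hD : ∀ a, D a = 1 - lam + lam * a * (1 + δ))
    (hK : ∀ a, K a = u * (1 - lam + lam * b^2 * (1+δ)^2)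
        + (1 - lam + lam * a^2 * (1+δ)^2) - (D a)^2)
    (hs : ∀ a, 0 < a → s a = D a / Real.sqrt (K a)) :
    ∀ a, 0 < a →
      0 < K a ∧ DifferentiableAt ℝ s a ∧
      (0 < deriv s a ↔ a < (1+u)/(1+δ) + lam/(1-lam) * (u * b^2 * (1+δ))) := by
  intro a ha
  have hD' : D = portfolioMean lam δ := funext hD
  subst hD'
  have hK' : K = portfolioVariance u b lam δ := funext hK
  subst hK'
  have hKpos := portfolioVariance_pos (b := b) (δ := δ) hu hlam a
  have hs_near :
      s =ᶠ[nhds a] fun x => portfolioMean lam δ x / √(portfolioVariance u b lam δ x) :=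
    Filter.eventually_of_mem (Ioi_mem_nhds ha) hs
  have hderiv := ((hasDerivAt_portfolioMean a).div_sqrt
    (hasDerivAt_portfolioVariance a) hKpos).congr_of_eventuallyEq hs_near
  refine ⟨hKpos, hderiv.differentiableAt, ?_⟩
  have hc : 0 < 1 + δ := by linarith
  have h1lam : 0 < 1 - lam := sub_pos.mpr hlam.2
  have hlam₀ := hlam.1
  rw [hderiv.deriv, div_pos_iff_of_pos_right (by positivity),
    sharpe_derivative_numerator_eq hlam.2.ne hδ.ne', mul_pos_iff_of_pos_left (by positivity),
    sub_pos]

/-- Monotonicity of the two-state portfolio Sharpe ratio in the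
mean-excess-return ratio a: for a > 0, s(a) = D(a)/√K(a) is differentiable (K(a) > 0) and
∂s/∂a > 0 if and only if a < (1+u)/(1+δ) + (λ/(1−λ))·u b²(1+δ). -/
theorem sharpe_monotone_in_a
    (u b lam δ : ℝ) (hu : 0 < u) (hb : 0 < b)
    (hlam : lam ∈ Set.Ioo (0:ℝ) 1) (hδ : -1 < δ)
    (D K s : ℝ → ℝ)
    (hD : ∀ a, D a = 1 - lam + lam * a * (1 + δ))
    (hK : ∀ a, K a = u * (1 - lam + lam * b^2 * (1+δ)^2)
        + (1 - lam + lam * a^2 * (1+δ)^2) - (D a)^2)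
    (hs : ∀ a, 0 < a → s a = D a / Real.sqrt (K a)) :
    ∀ a, 0 < a →
      0 < K a ∧ DifferentiableAt ℝ s a ∧
      (0 < deriv s a ↔ a < (1+u)/(1+δ) + lam/(1-lam) * (u * b^2 * (1+δ))) :=
  sharpe_monotone_in_a_general u b lam δ hu hlam hδ D K s hD hK hs
end

section
/- Fix u > 0, a > 0, b > 0 and δ > −1 with (a(1+δ) − 1)·((a² + u b²)(1+δ)² − (1+u)) > 0, and for λ ∈ (0,1) set s(λ) := D(λ)/√K(λ), where D(λ) := 1 − λ + λ a (1+δ) and K(λ) := u(1 − λ + λ b²(1+δ)²) + (1 − λ + λ a²(1+δ)²) − D(λ)² (one has K(λ) > 0). Then s is differentiable in λ and ∂s/∂λ > 0 if and only if λ > [ (a² + u b²)(1+δ)² − (1+u)(2a(1+δ) − 1) ] / [ (a(1+δ) − 1)·((a² + u b²)(1+δ)² − (1+u)) ]. -/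
/-- Monotonicity of the two-state portfolio Sharpe ratio in the stationary
probability λ of the contraction state: for λ ∈ (0,1), s(λ) = D(λ)/√K(λ) is differentiable
(K(λ) > 0) and ∂s/∂λ > 0 iff λ exceeds the stated threshold. -/
theorem sharpe_monotone_in_lam
    (u a b δ : ℝ) (hu : 0 < u) (ha : 0 < a) (hb : 0 < b) (hδ : -1 < δ)
    (hsign : 0 < (a*(1+δ) - 1) * ((a^2 + u*b^2)*(1+δ)^2 - (1+u)))
    (D K s : ℝ → ℝ)
    (hD : ∀ lam, D lam = 1 - lam + lam * a * (1 + δ))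
    (hK : ∀ lam, K lam = u * (1 - lam + lam * b^2 * (1+δ)^2)
        + (1 - lam + lam * a^2 * (1+δ)^2) - (D lam)^2)
    (hs : ∀ lam ∈ Set.Ioo (0:ℝ) 1, s lam = D lam / Real.sqrt (K lam)) :
    ∀ lam ∈ Set.Ioo (0:ℝ) 1,
      0 < K lam ∧ DifferentiableAt ℝ s lam ∧
      (0 < deriv s lam ↔
        ((a^2 + u*b^2)*(1+δ)^2 - (1+u)*(2*a*(1+δ) - 1)) /
          ((a*(1+δ) - 1) * ((a^2 + u*b^2)*(1+δ)^2 - (1+u))) < lam) := by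
  have hDfun : D = fun x => 1 - x + x * a * (1 + δ) := funext hD
  subst hDfun
  have hKfun : K = fun x => u * (1 - x + x * b^2 * (1+δ)^2)
      + (1 - x + x * a^2 * (1+δ)^2) - (1 - x + x * a * (1 + δ))^2 := by
    funext x; rw [hK x]
  subst hKfun
  intro lam hlam
  obtain ⟨h0, h1⟩ := hlam
  have hd : 0 < 1 + δ := by linarith
  -- positivity of K
  have hKpos : ∀ x ∈ Set.Ioo (0:ℝ) 1, 0 < u * (1 - x + x * b^2 * (1+δ)^2)
      + (1 - x + x * a^2 * (1+δ)^2) - (1 - x + x * a * (1 + δ))^2 := by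
    intro x hx
    obtain ⟨hx0, hx1⟩ := hx
    have e : u * (1 - x + x * b^2 * (1+δ)^2)
      + (1 - x + x * a^2 * (1+δ)^2) - (1 - x + x * a * (1 + δ))^2
      = u * ((1-x) + x * (b*(1+δ))^2) + x*(1-x)*(a*(1+δ)-1)^2 := by ring
    rw [e]
    have h2 : 0 < (1-x) + x * (b*(1+δ))^2 := by
      have := mul_nonneg hx0.le (sq_nonneg (b*(1+δ)))
      linarith
    have h3 : 0 ≤ x*(1-x)*(a*(1+δ)-1)^2 :=
      mul_nonneg (mul_nonneg hx0.le (by linarith)) (sq_nonneg _)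
    nlinarith [mul_pos hu h2]
  have hKl : 0 < u * (1 - lam + lam * b^2 * (1+δ)^2)
      + (1 - lam + lam * a^2 * (1+δ)^2) - (1 - lam + lam * a * (1 + δ))^2 :=
    hKpos lam ⟨h0, h1⟩
  set Kl : ℝ := u * (1 - lam + lam * b^2 * (1+δ)^2)
      + (1 - lam + lam * a^2 * (1+δ)^2) - (1 - lam + lam * a * (1 + δ))^2 with hKldef
  have hsk : 0 < Real.sqrt Kl := Real.sqrt_pos.2 hKl
  have hsq2 : Real.sqrt Kl ^ 2 = Kl := Real.sq_sqrt hKl.le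
  -- derivatives
  have hid := hasDerivAt_id lam
  have hc1 : HasDerivAt (fun x : ℝ => 1 - x) (0 - 1) lam := (hasDerivAt_const lam 1).sub hid
  have hDd : HasDerivAt (fun x : ℝ => 1 - x + x * a * (1 + δ)) (0 - 1 + 1 * a * (1 + δ)) lam :=
    hc1.add ((hid.mul_const a).mul_const (1 + δ))
  have ht1 : HasDerivAt (fun x : ℝ => u * (1 - x + x * b^2 * (1+δ)^2))
      (u * (0 - 1 + 1 * b^2 * (1+δ)^2)) lam :=
    HasDerivAt.const_mul u (hc1.add ((hid.mul_const (b^2)).mul_const ((1+δ)^2)))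
  have ht2 : HasDerivAt (fun x : ℝ => 1 - x + x * a^2 * (1+δ)^2)
      (0 - 1 + 1 * a^2 * (1+δ)^2) lam :=
    hc1.add ((hid.mul_const (a^2)).mul_const ((1+δ)^2))
  have hKd := (ht1.add ht2).sub (hDd.pow 2)
  have hskd := (Real.hasDerivAt_sqrt hKl.ne').comp lam hKd
  have hne : Real.sqrt Kl ≠ 0 := hsk.ne'
  have hdiv := hDd.div hskd hne
  -- eventual equality with s
  have hmem : Set.Ioo (0:ℝ) 1 ∈ nhds lam := isOpen_Ioo.mem_nhds ⟨h0, h1⟩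
  have hEq : s =ᶠ[nhds lam] fun x => (1 - x + x * a * (1 + δ)) /
      Real.sqrt (u * (1 - x + x * b^2 * (1+δ)^2)
      + (1 - x + x * a^2 * (1+δ)^2) - (1 - x + x * a * (1 + δ))^2) := by
    filter_upwards [hmem] with x hx
    exact hs x hx
  have hdiff : DifferentiableAt ℝ s lam := by
    have := hdiv.differentiableAt
    exact this.congr_of_eventuallyEq hEq
  refine ⟨hKl, hdiff, ?_⟩
  have hderiv : deriv s lam = ((0 - 1 + 1 * a * (1 + δ)) * Real.sqrt Kl -
      (1 - lam + lam * a * (1 + δ)) * (1 / (2 * Real.sqrt Kl) *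
        (u * (0 - 1 + 1 * b^2 * (1+δ)^2) + (0 - 1 + 1 * a^2 * (1+δ)^2) -
          (2:ℕ) * (1 - lam + lam * a * (1 + δ)) ^ (2-1) * (0 - 1 + 1 * a * (1 + δ))))) /
      Real.sqrt Kl ^ 2 := by
    rw [hEq.deriv_eq]
    exact hdiv.deriv
  have hinv : Real.sqrt Kl * (Real.sqrt Kl)⁻¹ = 1 := mul_inv_cancel₀ hne
  have key : deriv s lam =
      ((a*(1+δ) - 1) * ((a^2 + u*b^2)*(1+δ)^2 - (1+u)) * lam
        - ((a^2 + u*b^2)*(1+δ)^2 - (1+u)*(2*a*(1+δ) - 1))) / (2 * Kl * Real.sqrt Kl) := by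
    rw [hderiv, div_eq_div_iff (by positivity) (by positivity), Real.sq_sqrt hKl.le]
    push_cast
    linear_combination (2*(0 - 1 + 1*a*(1+δ))*Kl) * hsq2
      - (Kl*(1 - lam + lam*a*(1+δ))*(u*(0-1+1*b^2*(1+δ)^2) + (0-1+1*a^2*(1+δ)^2)
          - 2*(1 - lam + lam*a*(1+δ))*(0 - 1 + 1*a*(1+δ)))) * hinv
      + (2*(0 - 1 + 1*a*(1+δ))*Kl) * hKldef
  rw [key]
  have hden : 0 < 2 * Kl * Real.sqrt Kl := by positivity
  rw [div_pos_iff_of_pos_right hden]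
  constructor
  · intro h
    rw [div_lt_iff₀ hsign]
    linarith
  · intro h
    rw [div_lt_iff₀ hsign] at h
    linarith
end

section
/- Let β > 0, σ₀ > 0, σ_ε > 0 and p ∈ (0,1], and define f : [1,∞) → ℝ by f(φ) := (βσ₀/√φ)(1 − p(φ−1)/2) + √(β²σ₀²/φ + σ_ε²) · p(φ−1)/2. Then f attains its minimum over [1,∞), and the minimizer φ₀ ∈ [1,∞) is unique. -/
/-!
Write `a = βσ₀`, `c = σ_ε²` and `S = √(a² + cφ)`. Then `√φ · f(φ) = a + (p(φ - 1)/2)(S - a)`, and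
differentiating gives `2φ√φ · f'(φ) = p(S - a)φ + (pa/2)(φ - 1)(1 - a/S) - a`. Both products on
the right are increasing in `φ ≥ 1` and the first one is unbounded, so `f'` changes sign exactly
once on `(1, ∞)` (from negative to positive) or is positive throughout. Hence `f` decreases
strictly on `[1, φ₀]` and increases strictly on `[φ₀, ∞)` for some `φ₀ ≥ 1`, which is then the
unique minimizer.
-/

open Set

theorem existsUnique_isMinOn_Ici_of_strictAntiOn_of_strictMonoOn {f : ℝ → ℝ} {a x₀ : ℝ}
    (hx₀ : a ≤ x₀) (hanti : StrictAntiOn f (Icc a x₀)) (hmono : StrictMonoOn f (Ici x₀)) :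
    ∃! x, x ∈ Ici a ∧ IsMinOn f (Ici a) x := by
  have hlt : ∀ x ∈ Ici a, x ≠ x₀ → f x₀ < f x := by
    intro x hx hne
    rcases hne.lt_or_gt with h | h
    · exact hanti ⟨hx, h.le⟩ ⟨hx₀, le_rfl⟩ h
    · exact hmono self_mem_Ici h.le h
  refine ⟨x₀, ⟨hx₀, isMinOn_iff.2 fun x hx => ?_⟩, fun x ⟨hx, hmin⟩ => ?_⟩
  · rcases eq_or_ne x x₀ with rfl | hne
    exacts [le_rfl, (hlt x hx hne).le]
  · by_contra hne
    exact (hlt x hx hne).not_ge (hmin hx₀)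

theorem StrictMonoOn.exists_neg_on_Ico_pos_on_Ioi {N : ℝ → ℝ} {a T : ℝ}
    (hcont : ContinuousOn N (Icc a T)) (hmono : StrictMonoOn N (Ici a)) (hT : a ≤ T)
    (hNT : 0 < N T) :
    ∃ x₀ ∈ Ici a, (∀ x ∈ Ico a x₀, N x < 0) ∧ ∀ x ∈ Ioi x₀, 0 < N x := by
  rcases le_or_gt 0 (N a) with hNa | hNa
  · exact ⟨a, self_mem_Ici, fun x hx => absurd hx.2 hx.1.not_gt,
      fun x hx => hNa.trans_lt (hmono self_mem_Ici (mem_Ici.2 hx.le) hx)⟩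
  · obtain ⟨x₀, hx₀, hNx₀⟩ := intermediate_value_Icc hT hcont ⟨hNa.le, hNT.le⟩
    refine ⟨x₀, hx₀.1, fun x hx => ?_, fun x hx => ?_⟩
    · exact hNx₀ ▸ hmono hx.1 hx₀.1 hx.2
    · exact hNx₀ ▸ hmono hx₀.1 (mem_Ici.2 (hx₀.1.trans hx.le)) hx

theorem exists_strictAntiOn_Icc_strictMonoOn_Ici_of_deriv {f N : ℝ → ℝ} {a T : ℝ}
    (hf : ContinuousOn f (Ici a)) (hN : ContinuousOn N (Icc a T))
    (hNmono : StrictMonoOn N (Ici a)) (hT : a ≤ T) (hNT : 0 < N T)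
    (hneg : ∀ x ∈ Ioi a, N x < 0 → deriv f x < 0)
    (hpos : ∀ x ∈ Ioi a, 0 < N x → 0 < deriv f x) :
    ∃ x₀ ∈ Ici a, StrictAntiOn f (Icc a x₀) ∧ StrictMonoOn f (Ici x₀) := by
  obtain ⟨x₀, hx₀, hNneg, hNpos⟩ := hNmono.exists_neg_on_Ico_pos_on_Ioi hN hT hNT
  refine ⟨x₀, hx₀, ?_, ?_⟩
  · refine strictAntiOn_of_deriv_neg (convex_Icc a x₀) (hf.mono Icc_subset_Ici_self) ?_
    rw [interior_Icc]
    exact fun x hx => hneg x hx.1 (hNneg x (Ioo_subset_Ico_self hx))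
  · refine strictMonoOn_of_deriv_pos (convex_Ici x₀) (hf.mono (Ici_subset_Ici.2 hx₀)) ?_
    rw [interior_Ici]
    exact fun x hx => hpos x (mem_Ioi.2 (hx₀.trans_lt hx)) (hNpos x hx)

namespace RoboAdvising

noncomputable def personalization (a c p φ : ℝ) : ℝ :=
  (a + p * (φ - 1) / 2 * (√(a ^ 2 + c * φ) - a)) / √φ

noncomputable def slopeFactor (a c p φ : ℝ) : ℝ :=
  p * (√(a ^ 2 + c * φ) - a) * φ + p * a / 2 * (φ - 1) * (1 - a / √(a ^ 2 + c * φ)) - a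

theorem personalization_eq (a c p : ℝ) {φ : ℝ} (hφ : 0 < φ) :
    personalization a c p φ
      = a / √φ * (1 - p * (φ - 1) / 2) + √(a ^ 2 / φ + c) * (p * (φ - 1) / 2) := by
  rw [show a ^ 2 / φ + c = (a ^ 2 + c * φ) / φ by field_simp, Real.sqrt_div' _ hφ.le,
    personalization]
  ring

theorem hasDerivAt_personalization {a c p φ : ℝ} (hc : 0 < c) (hφ : 0 < φ) :
    HasDerivAt (personalization a c p) (slopeFactor a c p φ / (2 * φ * √φ)) φ := by
  have hS : 0 < a ^ 2 + c * φ := by positivity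
  have hdS : HasDerivAt (fun x => √(a ^ 2 + c * x)) (c / (2 * √(a ^ 2 + c * φ))) φ := by
    simpa using (((hasDerivAt_id φ).const_mul c).const_add (a ^ 2)).sqrt hS.ne'
  have hq : HasDerivAt (fun x => p * (x - 1) / 2) (p / 2) φ := by
    simpa using (((hasDerivAt_id φ).sub_const 1).const_mul p).div_const 2
  have := ((hq.mul (hdS.sub_const a)).const_add a).div (Real.hasDerivAt_sqrt hφ.ne')
    (Real.sqrt_ne_zero'.2 hφ)
  refine this.congr_deriv ?_
  have hS2 : √(a ^ 2 + c * φ) ^ 2 = a ^ 2 + c * φ := Real.sq_sqrt hS.le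
  have hr2 : √φ ^ 2 = φ := Real.sq_sqrt hφ.le
  simp only [Pi.mul_apply, slopeFactor]
  field_simp
  rw [hr2]
  linear_combination (-φ * p * (φ - 1)) * hS2

theorem slopeFactor_strictMonoOn {a c p : ℝ} (ha : 0 ≤ a) (hc : 0 < c) (hp : 0 < p) :
    StrictMonoOn (slopeFactor a c p) (Ici 1) := by
  intro x hx y hy hxy
  have hx0 : 0 < x := zero_lt_one.trans_le hx
  have hSx : a < √(a ^ 2 + c * x) := Real.lt_sqrt_of_sq_lt (by nlinarith)
  have hSxy : √(a ^ 2 + c * x) < √(a ^ 2 + c * y) :=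
    Real.sqrt_lt_sqrt (by positivity) (by nlinarith)
  have hgrowth : (√(a ^ 2 + c * x) - a) * x < (√(a ^ 2 + c * y) - a) * y :=
    mul_lt_mul'' (by linarith) hxy (by linarith) hx0.le
  have hratio : a / √(a ^ 2 + c * y) ≤ a / √(a ^ 2 + c * x) :=
    div_le_div_of_nonneg_left ha (by linarith) hSxy.le
  have hshrink : (x - 1) * (1 - a / √(a ^ 2 + c * x)) ≤ (y - 1) * (1 - a / √(a ^ 2 + c * y)) :=
    mul_le_mul (by linarith) (by linarith)
      (sub_nonneg.2 ((div_le_one (by linarith)).2 hSx.le)) (by linarith [mem_Ici.1 hx])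
  unfold slopeFactor
  nlinarith [mul_lt_mul_of_pos_left hgrowth hp,
    mul_le_mul_of_nonneg_left hshrink (by positivity : 0 ≤ p * a / 2)]

theorem continuousOn_slopeFactor (a : ℝ) {c : ℝ} (p : ℝ) (hc : 0 < c) :
    ContinuousOn (slopeFactor a c p) (Ioi 0) := by
  have hS : ∀ x ∈ Ioi (0 : ℝ), √(a ^ 2 + c * x) ≠ 0 := fun x (hx : 0 < x) =>
    (Real.sqrt_pos.2 (by positivity)).ne'
  unfold slopeFactor
  fun_prop (disch := assumption)

theorem exists_slopeFactor_pos {a c p : ℝ} (ha : 0 ≤ a) (hc : 0 < c) (hp : 0 < p) :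
    ∃ T, 1 ≤ T ∧ 0 < slopeFactor a c p T := by
  set T := (a + a / p) ^ 2 / c + 1
  have hT : 1 ≤ T := le_add_of_nonneg_left (by positivity)
  have hST : a + a / p < √(a ^ 2 + c * T) := by
    apply Real.lt_sqrt_of_sq_lt
    have hcT : c * T = (a + a / p) ^ 2 + c := by simp only [T]; field_simp
    nlinarith [sq_nonneg a]
  have hS : 0 < √(a ^ 2 + c * T) := by positivity
  have hgap : a < p * (√(a ^ 2 + c * T) - a) := by
    rw [← div_lt_iff₀' hp]; linarith
  have hratio : 0 ≤ 1 - a / √(a ^ 2 + c * T) := by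
    rw [sub_nonneg, div_le_one hS]; linarith [div_nonneg ha hp.le]
  refine ⟨T, hT, ?_⟩
  unfold slopeFactor
  nlinarith [mul_nonneg (mul_nonneg (by positivity : 0 ≤ p * a / 2) (sub_nonneg.2 hT)) hratio]

theorem exists_strictAntiOn_strictMonoOn_personalization {a c p : ℝ} (ha : 0 ≤ a)
    (hc : 0 < c) (hp : 0 < p) :
    ∃ φ₀ ∈ Ici (1 : ℝ), StrictAntiOn (personalization a c p) (Icc 1 φ₀) ∧
      StrictMonoOn (personalization a c p) (Ici φ₀) := by
  obtain ⟨T, hT, hNT⟩ := exists_slopeFactor_pos ha hc hp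
  have hderiv : ∀ φ ∈ Ici (1 : ℝ),
      HasDerivAt (personalization a c p) (slopeFactor a c p φ / (2 * φ * √φ)) φ :=
    fun φ hφ => hasDerivAt_personalization hc (zero_lt_one.trans_le hφ)
  have hweight : ∀ φ ∈ Ici (1 : ℝ), 0 < 2 * φ * √φ := fun φ hφ => by
    have : 0 < φ := zero_lt_one.trans_le hφ
    positivity
  refine exists_strictAntiOn_Icc_strictMonoOn_Ici_of_deriv
    (fun φ hφ => (hderiv φ hφ).continuousAt.continuousWithinAt)
    ((continuousOn_slopeFactor a p hc).mono fun φ hφ => zero_lt_one.trans_le hφ.1)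
    (slopeFactor_strictMonoOn ha hc hp) hT hNT (fun φ hφ hN => ?_) (fun φ hφ hN => ?_)
  · rw [(hderiv φ (mem_Ici_of_Ioi hφ)).deriv]
    exact div_neg_of_neg_of_pos hN (hweight φ (mem_Ici_of_Ioi hφ))
  · rw [(hderiv φ (mem_Ici_of_Ioi hφ)).deriv]
    exact div_pos hN (hweight φ (mem_Ici_of_Ioi hφ))

end RoboAdvising

/-- For β > 0, σ₀ > 0, σ_ε > 0 and p ∈ (0,1], the approximate
personalization measure f(φ) = (βσ₀/√φ)(1 − p(φ−1)/2) + √(β²σ₀²/φ + σ_ε²)·p(φ−1)/2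
attains its minimum over [1,∞), and the minimizer is unique. -/
theorem personalization_unique_minimizer
    (β σ0 σε p : ℝ) (hβ : 0 < β) (hσ0 : 0 < σ0) (hσε : 0 < σε)
    (hp : p ∈ Set.Ioc (0:ℝ) 1)
    (f : ℝ → ℝ)
    (hf : ∀ φ, 1 ≤ φ → f φ = β*σ0/Real.sqrt φ * (1 - p*(φ-1)/2)
        + Real.sqrt (β^2*σ0^2/φ + σε^2) * (p*(φ-1)/2)) :
    ∃! φ₀, φ₀ ∈ Set.Ici (1:ℝ) ∧ IsMinOn f (Set.Ici 1) φ₀ := by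
  obtain ⟨φ₀, hφ₀, hanti, hmono⟩ :=
    RoboAdvising.exists_strictAntiOn_strictMonoOn_personalization (mul_pos hβ hσ0).le
      (pow_pos hσε 2) hp.1
  have hfeq : EqOn (RoboAdvising.personalization (β * σ0) (σε ^ 2) p) f (Ici 1) :=
    fun φ hφ => by
      rw [hf φ hφ, RoboAdvising.personalization_eq _ _ _ (zero_lt_one.trans_le hφ), mul_pow]
  exact existsUnique_isMinOn_Ici_of_strictAntiOn_of_strictMonoOn hφ₀
    (hanti.congr (hfeq.mono Icc_subset_Ici_self))
    (hmono.congr (hfeq.mono (Ici_subset_Ici.2 hφ₀)))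
end

section
/- Let β > 0, σ₀ > 0, σ_ε > 0 and p ∈ (0,1], and define f : [1,∞) → ℝ by f(φ) := (βσ₀/√φ)(1 − p(φ−1)/2) + √(β²σ₀²/φ + σ_ε²) · p(φ−1)/2. Then f is differentiable at φ = 1 (one-sidedly) with f′(1) = (βσ₀ p/2)·( √(1 + σ_ε²/(β²σ₀²)) − 1 − 1/p ). Consequently f′(1) ≥ 0 if and only if p σ_ε²/(β²σ₀²) ≥ 2 + 1/p; in particular, if p σ_ε/(β σ₀) < 1 then f′(1) < 0, so interacting at all times (φ = 1) does not minimize f. -/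
set_option maxHeartbeats 1000000 in
/-- One-sided derivative of the approximate personalization measure at φ = 1:
f′(1) = (βσ₀p/2)(√(1 + σ_ε²/(β²σ₀²)) − 1 − 1/p); f′(1) ≥ 0 iff pσ_ε²/(β²σ₀²) ≥ 2 + 1/p;
and if pσ_ε/(βσ₀) < 1 then f′(1) < 0, so φ = 1 does not minimize f over [1,∞). -/
theorem personalization_derivative_at_one
    (β σ0 σε p : ℝ) (hβ : 0 < β) (hσ0 : 0 < σ0) (hσε : 0 < σε)
    (hp : p ∈ Set.Ioc (0:ℝ) 1)
    (f : ℝ → ℝ)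
    (hf : ∀ φ, 1 ≤ φ → f φ = β*σ0/Real.sqrt φ * (1 - p*(φ-1)/2)
        + Real.sqrt (β^2*σ0^2/φ + σε^2) * (p*(φ-1)/2))
    (v : ℝ)
    (hv : v = β*σ0*p/2 * (Real.sqrt (1 + σε^2/(β^2*σ0^2)) - 1 - 1/p)) :
    HasDerivWithinAt f v (Set.Ici 1) 1 ∧
    (0 ≤ v ↔ 2 + 1/p ≤ p*σε^2/(β^2*σ0^2)) ∧
    (p*σε/(β*σ0) < 1 → v < 0 ∧ ¬ IsMinOn f (Set.Ici 1) 1) := by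
  obtain ⟨hp0, hp1⟩ := hp
  have hA : 0 < β * σ0 := mul_pos hβ hσ0
  have hA2 : (0:ℝ) < β^2*σ0^2 := by positivity
  have hq : p * (1/p) = 1 := mul_one_div_cancel hp0.ne'
  -- rewrite the sqrt in v
  have hsqrtv : Real.sqrt (1 + σε^2/(β^2*σ0^2)) = Real.sqrt (β^2*σ0^2 + σε^2) / (β*σ0) := by
    have h1 : 1 + σε^2/(β^2*σ0^2) = (β^2*σ0^2 + σε^2) / (β^2*σ0^2) := by
      field_simp
    rw [h1, Real.sqrt_div (by positivity)]
    congr 1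
    rw [show β^2*σ0^2 = (β*σ0)^2 by ring, Real.sqrt_sq hA.le]
  set S := Real.sqrt (β^2*σ0^2 + σε^2) with hS
  have hSpos : 0 < S := Real.sqrt_pos.mpr (by positivity)
  have hS2 : S^2 = β^2*σ0^2 + σε^2 := Real.sq_sqrt (by positivity)
  -- derivative computation
  have hderiv : HasDerivWithinAt f v (Set.Ici 1) 1 := by
    have hs1 : HasDerivAt Real.sqrt (1/(2*Real.sqrt 1)) 1 := Real.hasDerivAt_sqrt one_ne_zero
    have h1 : HasDerivAt (fun φ : ℝ => β*σ0/Real.sqrt φ)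
        ((0 * Real.sqrt 1 - β*σ0 * (1/(2*Real.sqrt 1))) / (Real.sqrt 1)^2) 1 :=
      (hasDerivAt_const 1 (β*σ0)).div hs1 (by simp)
    have hlin : HasDerivAt (fun φ : ℝ => p*(φ-1)/2) (p*1/2) 1 :=
      (((hasDerivAt_id (1:ℝ)).sub_const 1).const_mul p).div_const 2
    have h2 : HasDerivAt (fun φ : ℝ => 1 - p*(φ-1)/2) (0 - p*1/2) 1 :=
      (hasDerivAt_const 1 (1:ℝ)).sub hlin
    have hinner : HasDerivAt (fun φ : ℝ => β^2*σ0^2/φ + σε^2)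
        ((0 * 1 - β^2*σ0^2 * 1) / 1^2) 1 :=
      (((hasDerivAt_const 1 (β^2*σ0^2)).div (hasDerivAt_id 1) one_ne_zero)).add_const (σε^2)
    have hne : β^2*σ0^2/1 + σε^2 ≠ 0 := by positivity
    have hsq : HasDerivAt (fun φ : ℝ => Real.sqrt (β^2*σ0^2/φ + σε^2))
        (1/(2*Real.sqrt (β^2*σ0^2/1 + σε^2)) * ((0 * 1 - β^2*σ0^2 * 1) / 1^2)) 1 :=
      (Real.hasDerivAt_sqrt hne).comp 1 hinner
    have hg : HasDerivAt (fun φ : ℝ => β*σ0/Real.sqrt φ * (1 - p*(φ-1)/2)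
        + Real.sqrt (β^2*σ0^2/φ + σε^2) * (p*(φ-1)/2))
        (((0 * Real.sqrt 1 - β*σ0 * (1/(2*Real.sqrt 1))) / (Real.sqrt 1)^2) * (1 - p*(1-1)/2)
          + (β*σ0/Real.sqrt 1) * (0 - p*1/2)
          + ((1/(2*Real.sqrt (β^2*σ0^2/1 + σε^2)) * ((0 * 1 - β^2*σ0^2 * 1) / 1^2))
              * (p*(1-1)/2) + Real.sqrt (β^2*σ0^2/1 + σε^2) * (p*1/2))) 1 :=
      (h1.mul h2).add (hsq.mul hlin)
    have hval : ((0 * Real.sqrt 1 - β*σ0 * (1/(2*Real.sqrt 1))) / (Real.sqrt 1)^2) * (1 - p*(1-1)/2)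
          + (β*σ0/Real.sqrt 1) * (0 - p*1/2)
          + ((1/(2*Real.sqrt (β^2*σ0^2/1 + σε^2)) * ((0 * 1 - β^2*σ0^2 * 1) / 1^2))
              * (p*(1-1)/2) + Real.sqrt (β^2*σ0^2/1 + σε^2) * (p*1/2)) = v := by
      rw [hv, hsqrtv, Real.sqrt_one]
      rw [show β^2*σ0^2/1 + σε^2 = β^2*σ0^2 + σε^2 by ring, ← hS]
      field_simp
      ring
    rw [← hval]
    exact (hg.hasDerivWithinAt).congr (fun x hx => hf x hx) (hf 1 le_rfl)
  have hveq : v = p/2 * S - β*σ0*p/2 - β*σ0/2 := by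
    rw [hv, hsqrtv]
    field_simp
  -- iff part
  have hiff : 0 ≤ v ↔ 2 + 1/p ≤ p*σε^2/(β^2*σ0^2) := by
    have key : 0 ≤ v ↔ β*σ0*(1 + 1/p) ≤ S := by
      rw [hveq]
      constructor
      · intro h; nlinarith
      · intro h; nlinarith
    rw [key, le_div_iff₀ hA2]
    have hexp : p*(β*σ0*(1+1/p))^2 = β^2*σ0^2*(p + 2 + 1/p) := by field_simp; ring
    constructor
    · intro h
      have hsqle : (β*σ0*(1+1/p))^2 ≤ S^2 := pow_le_pow_left₀ (by positivity) h 2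
      have h3 := mul_le_mul_of_nonneg_left hsqle hp0.le
      rw [hexp, hS2] at h3
      nlinarith [h3]
    · intro h
      have h4 : p*(β*σ0*(1+1/p))^2 ≤ p*S^2 := by rw [hexp, hS2]; nlinarith
      have h5 : (β*σ0*(1+1/p))^2 ≤ S^2 := le_of_mul_le_mul_left h4 hp0
      calc β*σ0*(1+1/p) = Real.sqrt ((β*σ0*(1+1/p))^2) := (Real.sqrt_sq (by positivity)).symm
        _ ≤ Real.sqrt (S^2) := Real.sqrt_le_sqrt h5
        _ = S := Real.sqrt_sq hSpos.le
  refine ⟨hderiv, hiff, fun hlt => ?_⟩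
  have hps : p*σε < β*σ0 := (div_lt_one hA).mp hlt
  have hps2 : (p*σε)^2 < (β*σ0)^2 := by nlinarith [mul_pos hp0 hσε]
  have hnot : ¬ (2 + 1/p ≤ p*σε^2/(β^2*σ0^2)) := by
    rw [not_le, div_lt_iff₀ hA2]
    have h6 : p * (p*σε^2) < β^2*σ0^2 := by
      calc p * (p*σε^2) = (p*σε)^2 := by ring
        _ < (β*σ0)^2 := hps2
        _ = β^2*σ0^2 := by ring
    have h7 := mul_lt_mul_of_pos_left h6 (one_div_pos.mpr hp0)
    rw [← mul_assoc, one_div_mul_cancel hp0.ne', one_mul] at h7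
    calc p*σε^2 < 1/p * (β^2*σ0^2) := h7
      _ ≤ (2+1/p)*(β^2*σ0^2) := by nlinarith [hA2]
  have hvneg : v < 0 := not_le.mp (fun h => hnot (hiff.mp h))
  refine ⟨hvneg, fun hmin => ?_⟩
  have hcone : (1:ℝ) ∈ posTangentConeAt (Set.Ici (1:ℝ)) 1 := by
    apply mem_posTangentConeAt_of_segment_subset
    rw [segment_eq_Icc (by norm_num : (1:ℝ) ≤ 1+1)]
    exact Set.Icc_subset_Ici_self
  have h0 : (0:ℝ) ≤ (ContinuousLinearMap.smulRight (1 : ℝ →L[ℝ] ℝ) v) 1 :=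
    hmin.localize.hasFDerivWithinAt_nonneg hderiv.hasFDerivWithinAt hcone
  simp at h0
  exact absurd h0 (not_le.mpr hvneg)
end

section
/- Let μ̃ > 0, σ > 0, R ≥ 1, π̄ > 0, and let μ_a > 0 and μ_b be reals with μ_b > μ_a². On the interval I := (0, μ_a/(R(μ_b − μ_a²))) define h(x) := (μ̃/(σ² x)) · (μ_a − R x (μ_b − μ_a²)) / (μ_b + (μ̃/σ)²(μ_b − μ_a²)) − π̄. Then h is strictly decreasing on I, h(x) → +∞ as x → 0⁺, h(x) → −π̄ as x → μ_a/(R(μ_b − μ_a²)) from the left, and there exists a unique x ∈ I with h(x) = 0. -/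
/-!
With `c = μ̃ / (σ² (μ_b + (μ̃/σ)² (μ_b - μ_a²)))` and `K = c R (μ_b - μ_a²) + π̄`, `h` is the
hyperbola `x ↦ c μ_a / x - K` on `x > 0`. A positive multiple of `1/x` minus a constant is
strictly decreasing and blows up at `0⁺`; at the right endpoint of `I` the term `c μ_a / x`
equals `c R (μ_b - μ_a²)`, leaving `-π̄`. The only zero `c μ_a / K` lies in `I` because
`K > c R (μ_b - μ_a²)`, by `π̄ > 0`.
-/

open Filter Set Topology

section Hyperbola

variable {a : ℝ}

lemma strictAntiOn_div_sub_const (ha : 0 < a) (b : ℝ) :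
    StrictAntiOn (fun x : ℝ => a / x - b) (Ioi 0) := fun _ hx _ _ hxy =>
  sub_lt_sub_right (div_lt_div_of_pos_left ha hx hxy) b

lemma tendsto_div_sub_const_nhdsGT_zero (ha : 0 < a) (b : ℝ) :
    Tendsto (fun x : ℝ => a / x - b) (𝓝[>] 0) atTop := by
  simpa only [div_eq_mul_inv, sub_eq_add_neg] using
    tendsto_atTop_add_const_right _ (-b) (tendsto_inv_nhdsGT_zero.const_mul_atTop ha)

lemma tendsto_div_sub_const_nhdsLT (b : ℝ) {x₀ : ℝ} (hx₀ : x₀ ≠ 0) :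
    Tendsto (fun x : ℝ => a / x - b) (𝓝[<] x₀) (𝓝 (a / x₀ - b)) :=
  ((continuousAt_const.div continuousAt_id hx₀).sub continuousAt_const).continuousWithinAt.tendsto

end Hyperbola

lemma existsUnique_mem_eq_of_strictAntiOn {f : ℝ → ℝ} {s : Set ℝ} (hf : StrictAntiOn f s)
    {x₀ y : ℝ} (hx₀ : x₀ ∈ s) (hy : f x₀ = y) : ∃! x, x ∈ s ∧ f x = y :=
  ⟨x₀, ⟨hx₀, hy⟩, fun _ ⟨hx, hxy⟩ => hf.injOn hx hx₀ (hxy.trans hy.symm)⟩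

/-- The backward-induction function
h(x) = (μ̃/(σ²x))·(μ_a − Rx(μ_b − μ_a²))/(μ_b + (μ̃/σ)²(μ_b − μ_a²)) − π̄ is strictly
decreasing on I = (0, μ_a/(R(μ_b − μ_a²))), tends to +∞ at 0⁺, tends to −π̄ at the right
endpoint, and has a unique zero in I. -/
theorem implied_risk_aversion_unique
    (μt σ R pb μa μb : ℝ)
    (hμt : 0 < μt) (hσ : 0 < σ) (hR : 1 ≤ R) (hpb : 0 < pb)
    (hμa : 0 < μa) (hμb : μa^2 < μb)
    (h : ℝ → ℝ)
    (hh : ∀ x, h x = μt/(σ^2*x) * ((μa - R*x*(μb - μa^2))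
        / (μb + (μt/σ)^2*(μb - μa^2))) - pb) :
    StrictAntiOn h (Set.Ioo 0 (μa/(R*(μb - μa^2)))) ∧
    Filter.Tendsto h (nhdsWithin 0 (Set.Ioi 0)) Filter.atTop ∧
    Filter.Tendsto h (nhdsWithin (μa/(R*(μb - μa^2))) (Set.Iio (μa/(R*(μb - μa^2)))))
      (nhds (-pb)) ∧
    ∃! x, x ∈ Set.Ioo 0 (μa/(R*(μb - μa^2))) ∧ h x = 0 := by
  set D := μb - μa^2
  have hD : 0 < D := sub_pos.mpr hμb
  have hμb₀ : 0 < μb := (sq_nonneg μa).trans_lt hμb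
  set c := μt / (σ^2 * (μb + (μt/σ)^2 * D))
  set K := c * (R * D) + pb
  have hc : 0 < c := by positivity
  have hform : EqOn h (fun x => c * μa / x - K) (Ioi 0) := fun x (hx : 0 < x) => by
    rw [hh]; simp only [c, K]; field_simp; ring
  have hI : Ioo 0 (μa / (R * D)) ⊆ Ioi 0 := Ioo_subset_Ioi_self
  have hanti : StrictAntiOn h (Ioo 0 (μa / (R * D))) :=
    ((strictAntiOn_div_sub_const (by positivity) K).mono hI).congr (hform.mono hI).symm
  have hend : c * μa / (μa / (R * D)) - K = -pb := by
    simp only [K]; field_simp; ring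
  have hzero_mem : c * μa / K ∈ Ioo 0 (μa / (R * D)) := by
    refine ⟨by positivity, ?_⟩
    calc c * μa / K < c * μa / (c * (R * D)) :=
          div_lt_div_of_pos_left (by positivity) (by positivity) (by linarith)
      _ = μa / (R * D) := mul_div_mul_left _ _ hc.ne'
  refine ⟨hanti, ?_, ?_, existsUnique_mem_eq_of_strictAntiOn hanti hzero_mem ?_⟩
  · exact (tendsto_div_sub_const_nhdsGT_zero (by positivity) K).congr'
      (eventuallyEq_nhdsWithin_of_eqOn hform).symm
  · refine hend ▸ (tendsto_div_sub_const_nhdsLT K (by positivity)).congr' ?_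
    exact ((hform.eventuallyEq_of_mem (Ioi_mem_nhds (by positivity))).filter_mono
      nhdsWithin_le_nhds).symm
  · rw [hform hzero_mem.1]
    exact sub_eq_zero.mpr (div_div_cancel₀ (by positivity))
end

section
/- Let Z be a standard Gaussian random variable. There exists a constant C > 0 such that for all a ∈ [−1,1] and all b ∈ [0,1], | E[ |e^{a + bZ} − 1| ] − b·√(2/π) | ≤ C·(|a| + b²). -/
/-!
With `x = a + b z`, the integrand `|eˣ - 1|` differs from `|b z|` by at most
`|eˣ - 1 - x| + |a|`, and `|eˣ - 1 - x| ≤ x² e^|x|`. For `|a|, |b| ≤ 1` this Taylor remainder is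
dominated by a multiple of `(a² + b²) cosh (2 z)`, whose Gaussian mean is `e²` times `a² + b²`,
while `E |b Z| = b √(2/π)`. Since `a² ≤ |a|`, both errors are `O(|a| + b²)`.
-/

open MeasureTheory ProbabilityTheory Real

lemma abs_exp_sub_one_sub_self_le (x : ℝ) : |exp x - 1 - x| ≤ x ^ 2 * exp |x| := by
  have h := Complex.norm_exp_sub_sum_le_norm_mul_exp x 2
  norm_num [Finset.sum_range_succ] at h
  rw [sub_sub]
  exact_mod_cast h

lemma exp_abs_le_two_mul_cosh (x : ℝ) : exp |x| ≤ 2 * cosh x := by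
  rw [cosh_eq]
  linarith [exp_abs_le x]

lemma abs_exp_add_mul_sub_one_sub_self_le {a b : ℝ} (ha : |a| ≤ 1) (hb : |b| ≤ 1) (z : ℝ) :
    |exp (a + b * z) - 1 - (a + b * z)| ≤ 8 * exp 1 * (a ^ 2 + b ^ 2) * cosh (2 * z) := by
  set E := exp |z|
  have hE : 1 ≤ E := one_le_exp (abs_nonneg z)
  have hz_sq : z ^ 2 ≤ 2 * E := by
    nlinarith [quadratic_le_exp_of_nonneg (abs_nonneg z), sq_abs z, abs_nonneg z]
  have hx_sq : (a + b * z) ^ 2 ≤ 2 * a ^ 2 + 2 * b ^ 2 * z ^ 2 := by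
    nlinarith [sq_nonneg (a - b * z)]
  have hx_abs : exp |a + b * z| ≤ exp 1 * E := by
    rw [← exp_add, exp_le_exp]
    calc |a + b * z| ≤ |a| + |b| * |z| := by grw [abs_add_le, abs_mul]
      _ ≤ 1 + |z| := by gcongr; nlinarith [abs_nonneg z]
  have hE_sq : E ^ 2 ≤ 2 * cosh (2 * z) := by
    have : E ^ 2 = exp |2 * z| := by rw [sq, ← exp_add, abs_mul, abs_two, two_mul]
    exact this ▸ exp_abs_le_two_mul_cosh _
  calc |exp (a + b * z) - 1 - (a + b * z)|
      ≤ (a + b * z) ^ 2 * exp |a + b * z| := abs_exp_sub_one_sub_self_le _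
    _ ≤ (2 * a ^ 2 + 2 * b ^ 2 * z ^ 2) * (exp 1 * E) := by gcongr
    _ ≤ 4 * (a ^ 2 + b ^ 2) * E * (exp 1 * E) := by
      gcongr
      nlinarith [sq_nonneg a, sq_nonneg b]
    _ = 4 * exp 1 * (a ^ 2 + b ^ 2) * E ^ 2 := by ring
    _ ≤ 4 * exp 1 * (a ^ 2 + b ^ 2) * (2 * cosh (2 * z)) := by gcongr
    _ = 8 * exp 1 * (a ^ 2 + b ^ 2) * cosh (2 * z) := by ring

lemma abs_abs_exp_add_mul_sub_one_sub_abs_le {a b : ℝ} (ha : |a| ≤ 1) (hb : |b| ≤ 1) (z : ℝ) :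
    |(|exp (a + b * z) - 1| - |b * z|)| ≤ |a| + 8 * exp 1 * (a ^ 2 + b ^ 2) * cosh (2 * z) :=
  calc |(|exp (a + b * z) - 1| - |b * z|)|
      ≤ |exp (a + b * z) - 1 - b * z| := abs_abs_sub_abs_le_abs_sub _ _
    _ = |(exp (a + b * z) - 1 - (a + b * z)) + a| := by ring_nf
    _ ≤ |a| + 8 * exp 1 * (a ^ 2 + b ^ 2) * cosh (2 * z) := by
        grw [abs_add_le, abs_exp_add_mul_sub_one_sub_self_le ha hb, add_comm]

section Gaussian

variable {μ : ℝ} {v : NNReal}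

lemma integral_exp_mul_gaussianReal (t : ℝ) :
    ∫ x, exp (t * x) ∂gaussianReal μ v = exp (μ * t + v * t ^ 2 / 2) :=
  mgf_gaussianReal (p := gaussianReal μ v) (X := id) (by simp) t

lemma integrable_cosh_mul_gaussianReal (t : ℝ) :
    Integrable (fun x ↦ cosh (t * x)) (gaussianReal μ v) := by
  simp_rw [cosh_eq, ← neg_mul]
  exact ((integrable_exp_mul_gaussianReal t).add (integrable_exp_mul_gaussianReal (-t))).div_const 2

lemma integral_cosh_mul_gaussianReal (t : ℝ) :
    ∫ x, cosh (t * x) ∂gaussianReal μ v = cosh (μ * t) * exp (v * t ^ 2 / 2) := by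
  simp_rw [cosh_eq, ← neg_mul]
  rw [integral_div, integral_add (integrable_exp_mul_gaussianReal t)
    (integrable_exp_mul_gaussianReal (-t)), integral_exp_mul_gaussianReal,
    integral_exp_mul_gaussianReal, exp_add, exp_add]
  ring_nf

lemma integrable_abs_exp_add_mul_sub_one_gaussianReal (a b : ℝ) :
    Integrable (fun z ↦ |exp (a + b * z) - 1|) (gaussianReal μ v) := by
  simp_rw [exp_add]
  exact (((integrable_exp_mul_gaussianReal b).const_mul (exp a)).sub (integrable_const 1)).abs

end Gaussian

lemma integral_abs_gaussianReal : ∫ x, |x| ∂gaussianReal 0 1 = √(2 / π) := by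
  have h_Ioi : ∫ x in Set.Ioi (0 : ℝ), x * exp (-(1 / 2) * x ^ 2) = 1 := by
    have := integral_rpow_mul_exp_neg_mul_rpow (p := 2) (q := 1) (b := 1 / 2)
      (by norm_num) (by norm_num) (by norm_num)
    norm_num at this
    simpa using this
  have h_pdf : (fun x ↦ gaussianPDFReal 0 1 x • |x|) =
      fun x ↦ (√(2 * π))⁻¹ * (|x| * exp (-(1 / 2) * |x| ^ 2)) := by
    ext x
    simp only [gaussianPDFReal, smul_eq_mul, sq_abs]
    norm_num
    ring_nf
  rw [integral_gaussianReal_eq_integral_smul one_ne_zero, h_pdf, integral_const_mul,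
    integral_comp_abs (f := fun x ↦ x * exp (-(1 / 2) * x ^ 2)), h_Ioi,
    show 2 / π = 2 ^ 2 / (2 * π) by ring, sqrt_div' _ (by positivity), sqrt_sq zero_le_two]
  ring

lemma abs_integral_abs_exp_add_mul_sub_one_sub_le {a b : ℝ} (ha : |a| ≤ 1) (hb : |b| ≤ 1) :
    |(∫ z, |exp (a + b * z) - 1| ∂gaussianReal 0 1) - ∫ z, |b * z| ∂gaussianReal 0 1|
      ≤ |a| + 8 * exp 3 * (a ^ 2 + b ^ 2) := by
  have h_abs : Integrable (fun z ↦ |b * z|) (gaussianReal 0 1) :=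
    ((memLp_id_gaussianReal 1).integrable le_rfl).const_mul b |>.abs
  have h_cosh : Integrable (fun z ↦ 8 * exp 1 * (a ^ 2 + b ^ 2) * cosh (2 * z))
      (gaussianReal 0 1) := (integrable_cosh_mul_gaussianReal 2).const_mul _
  have h_dom_int : ∫ z, (|a| + 8 * exp 1 * (a ^ 2 + b ^ 2) * cosh (2 * z)) ∂gaussianReal 0 1
      = |a| + 8 * exp 3 * (a ^ 2 + b ^ 2) := by
    rw [integral_add (integrable_const _) h_cosh, integral_const, integral_const_mul,
      integral_cosh_mul_gaussianReal, show exp 3 = exp 1 * exp 2 by rw [← exp_add]; norm_num]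
    norm_num
    ring
  rw [← integral_sub (integrable_abs_exp_add_mul_sub_one_gaussianReal a b) h_abs, ← h_dom_int]
  exact norm_integral_le_of_norm_le (f := fun z ↦ |exp (a + b * z) - 1| - |b * z|)
    ((integrable_const _).add h_cosh) (ae_of_all _ (abs_abs_exp_add_mul_sub_one_sub_abs_le ha hb))

/-- For Z standard Gaussian, there is C > 0 such that for all a ∈ [−1,1] and
b ∈ [0,1], |E[|e^{a+bZ} − 1|] − b√(2/π)| ≤ C(|a| + b²). -/
theorem gaussian_abs_exp_approx :
    ∃ C : ℝ, 0 < C ∧ ∀ a ∈ Set.Icc (-1:ℝ) 1, ∀ b ∈ Set.Icc (0:ℝ) 1,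
      |(∫ z, |Real.exp (a + b*z) - 1| ∂(gaussianReal 0 1))
        - b * Real.sqrt (2/Real.pi)| ≤ C * (|a| + b^2) := by
  refine ⟨8 * exp 3 + 1, by positivity, ?_⟩
  rintro a ⟨ha₁, ha₂⟩ b ⟨hb₀, hb₁⟩
  have h_mean : ∫ z, |b * z| ∂gaussianReal 0 1 = b * √(2 / π) := by
    simp_rw [abs_mul, abs_of_nonneg hb₀]
    rw [integral_const_mul, integral_abs_gaussianReal]
  have ha : |a| ≤ 1 := abs_le.2 ⟨ha₁, ha₂⟩
  have key := abs_integral_abs_exp_add_mul_sub_one_sub_le ha (abs_le.2 ⟨by linarith, hb₁⟩)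
  rw [h_mean] at key
  have h_sq_le_abs : a ^ 2 ≤ |a| := by nlinarith [sq_abs a, abs_nonneg a]
  nlinarith [exp_pos 3]
end
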